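/- Assume q^{2d} ≠ 1 for all d ≥ 1. Let m, n ≥ 1, 0 ≤ i ≤ m, 0 ≤ j ≤ n, and let f := x_1^{m−i} y_1^{i} x_2^{n−j} y_2^{j} ∈ H_2. Then [m][n+1]·P₂₁(P₁₂(f)) − [n][m+1]·P₁₂(P₂₁(f)) = [m−n]·f. -/

import Mathlib

noncomputable section

/-- Generators of the algebra `H q n`: `x i` and `y i` for `i : Fin n`. -/
inductive Gen (n : ℕ) : Type
  | x : Fin n → Gen n
  | y : Fin n → Gen n

open FreeAlgebra in
/-- The defining relations of the braided algebra `H_n`: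
`x_i y_i = q y_i x_i`, and for `i < j`:
`x_j x_i = q² x_i x_j`, `y_j y_i = q² y_i y_j`,
`x_j y_i = q y_i x_j + (q² − 1) x_i y_j`, `y_j x_i = q x_i y_j`. -/
inductive HRel (q : ℂ) (n : ℕ) :
    FreeAlgebra ℂ (Gen n) → FreeAlgebra ℂ (Gen n) → Prop
  | diag (i : Fin n) :
      HRel q n (ι ℂ (Gen.x i) * ι ℂ (Gen.y i)) (q • (ι ℂ (Gen.y i) * ι ℂ (Gen.x i)))
  | xx {i j : Fin n} (h : i < j) :
      HRel q n (ι ℂ (Gen.x j) * ι ℂ (Gen.x i)) ((q ^ 2) • (ι ℂ (Gen.x i) * ι ℂ (Gen.x j)))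
  | yy {i j : Fin n} (h : i < j) :
      HRel q n (ι ℂ (Gen.y j) * ι ℂ (Gen.y i)) ((q ^ 2) • (ι ℂ (Gen.y i) * ι ℂ (Gen.y j)))
  | xy {i j : Fin n} (h : i < j) :
      HRel q n (ι ℂ (Gen.x j) * ι ℂ (Gen.y i))
        (q • (ι ℂ (Gen.y i) * ι ℂ (Gen.x j)) + (q ^ 2 - 1) • (ι ℂ (Gen.x i) * ι ℂ (Gen.y j)))
  | yx {i j : Fin n} (h : i < j) :
      HRel q n (ι ℂ (Gen.y j) * ι ℂ (Gen.x i)) (q • (ι ℂ (Gen.x i) * ι ℂ (Gen.y j)))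

/-- The braided module algebra `H_n`. -/
abbrev H (q : ℂ) (n : ℕ) : Type := RingQuot (HRel q n)

/-- The generator `x i` of `H_n`. -/
def X (q : ℂ) {n : ℕ} (i : Fin n) : H q n :=
  RingQuot.mkAlgHom ℂ (HRel q n) (FreeAlgebra.ι ℂ (Gen.x i))

/-- The generator `y i` of `H_n`. -/
def Y (q : ℂ) {n : ℕ} (i : Fin n) : H q n :=
  RingQuot.mkAlgHom ℂ (HRel q n) (FreeAlgebra.ι ℂ (Gen.y i))

/-- The bracket symbol `(ij) = q^{-1/2} x_i y_j - q^{1/2} y_i x_j`, where `s = q^{1/2}`. -/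
def br (q s : ℂ) {n : ℕ} (i j : Fin n) : H q n :=
  s⁻¹ • (X q i * Y q j) - s • (Y q i * X q j)

/-- The quantum integer `[m] = (q^m - q^{-m})/(q - q^{-1})` for `m : ℤ`. -/
def qInt (q : ℂ) (m : ℤ) : ℂ := (q ^ m - q ^ (-m)) / (q - q⁻¹)

/-- The quantum factorial `[m]! = [1][2]⋯[m]`. -/
def qFact (q : ℂ) (m : ℕ) : ℂ := ∏ i ∈ Finset.range m, qInt q (i + 1)

/-- The quantum binomial coefficient `[m choose k] = [m]!/([k]![m-k]!)` (zero for `k > m`). -/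
def qBinom (q : ℂ) (m k : ℕ) : ℂ :=
  if k ≤ m then qFact q m / (qFact q k * qFact q (m - k)) else 0

/-- The ordered monomial `x₁^a y₁^b x₂^c y₂^d` of `H₂`. -/
def mono2 (q : ℂ) (a b c d : ℕ) : H q 2 :=
  X q 0 ^ a * Y q 0 ^ b * X q 1 ^ c * Y q 1 ^ d

/-- **Proposition 3.5 (ii).** For the polarisation operators `P₁₂`, `P₂₁`
(given on the PBW basis by the formulas below) and
`f = x₁^{m−i} y₁^{i} x₂^{n−j} y₂^{j}` one has
`[m][n+1]·P₂₁(P₁₂ f) − [n][m+1]·P₁₂(P₂₁ f) = [m−n]·f`. -/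
theorem stmt9 (q s : ℂ) (hq : ‖q‖ = 1) (hq1 : q ≠ 1) (hq2 : q ≠ -1)
    (hq3 : q ≠ Complex.I) (hq4 : q ≠ -Complex.I) (hs : s ^ 2 = q)
    (hroot : ∀ d : ℕ, 1 ≤ d → q ^ (2 * d) ≠ 1)
    (P12 P21 : H q 2 →ₗ[ℂ] H q 2)
    (hP12 : ∀ a b c d : ℕ, P12 (mono2 q a b c d) =
      (qInt q (a + b))⁻¹ •
        ((qInt q a) • mono2 q (a - 1) b (c + 1) d +
          (q ^ ((a : ℤ) - c) * qInt q b) • mono2 q a (b - 1) c (d + 1)))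
    (hP21 : ∀ a b c d : ℕ, P21 (mono2 q a b c d) =
      (qInt q (c + d))⁻¹ •
        ((q ^ ((d : ℤ) - b) * qInt q c) • mono2 q (a + 1) b (c - 1) d +
          (qInt q d) • mono2 q a (b + 1) c (d - 1)))
    (m n i j : ℕ) (hm : 1 ≤ m) (hn : 1 ≤ n) (hi : i ≤ m) (hj : j ≤ n) :
    (qInt q m * qInt q (n + 1)) • P21 (P12 (mono2 q (m - i) i (n - j) j)) -
      (qInt q n * qInt q (m + 1)) • P12 (P21 (mono2 q (m - i) i (n - j) j)) =
      qInt q ((m : ℤ) - n) • mono2 q (m - i) i (n - j) j := by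

  -- basic nonvanishing facts
  have hq0 : q ≠ 0 := by
    intro h; rw [h] at hq; simp at hq
  have hden : q - q⁻¹ ≠ 0 := by
    intro h
    have h2 : q ^ 2 ≠ 1 := by simpa using hroot 1 le_rfl
    apply h2
    field_simp at h
    linear_combination h
  have hZ : ∀ e : ℤ, 0 < e → qInt q e ≠ 0 := by
    intro e he
    have hnum : q ^ e - q ^ (-e) ≠ 0 := by
      intro h
      have h1 : q ^ e = q ^ (-e) := by linear_combination h
      apply hroot e.toNat (by omega)
      have h2 : q ^ ((2 * e.toNat : ℕ) : ℤ) = 1 := by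
        have he' : ((2 * e.toNat : ℕ) : ℤ) = e + e := by omega
        rw [he', zpow_add₀ hq0]
        nth_rewrite 2 [h1]
        rw [← zpow_add₀ hq0]
        norm_num
      rwa [zpow_natCast] at h2
    exact div_ne_zero hnum hden
  have qint0 : qInt q 0 = 0 := by simp [qInt]
  -- scalar identities for quantum integers
  have hL : ∀ x y x1 y1 r : ℤ, x1 = x + 1 → y1 = y + 1 → r = x - y →
      qInt q x * qInt q y1 - qInt q x1 * qInt q y = qInt q r := by
    rintro x y _ _ _ rfl rfl rfl
    simp only [qInt, div_mul_div_comm]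
    rw [div_sub_div_same, div_eq_div_iff (mul_ne_zero hden hden) hden]
    simp only [zpow_add₀ hq0, zpow_sub₀ hq0, zpow_neg, zpow_one, inv_inv, inv_div]
    ring
  have hM : ∀ x y r : ℤ, r = x - y →
      q ^ y * qInt q x - q ^ x * qInt q y = qInt q r := by
    rintro x y _ rfl
    simp only [qInt, mul_div_assoc']
    rw [div_sub_div_same, div_eq_div_iff hden hden]
    simp only [zpow_sub₀ hq0, zpow_neg, inv_inv, inv_div]
    ring
  have hN : ∀ x y : ℤ, y = -x → qInt q x + qInt q y = 0 := by
    rintro x _ rfl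
    simp only [qInt, zpow_neg, neg_neg]
    ring
  obtain ⟨a, rfl⟩ : ∃ a, m = a + i := ⟨m - i, by omega⟩
  obtain ⟨c, rfl⟩ : ∃ c, n = c + j := ⟨n - j, by omega⟩
  simp only [Nat.add_sub_cancel]
  -- normalized forms of the operators on the relevant monomials
  have hA : ∀ a b c d : ℕ, qInt q (a : ℤ) • P21 (mono2 q (a-1) b (c+1) d)
      = qInt q (a : ℤ) • ((qInt q ((c : ℤ) + (d : ℤ) + 1))⁻¹ •
          ((q ^ ((d : ℤ) - (b : ℤ)) * qInt q ((c : ℤ) + 1)) • mono2 q a b c d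
            + qInt q (d : ℤ) • mono2 q (a-1) (b+1) (c+1) (d-1))) := by
    intro a b c d
    match a with
    | 0 => simp [qint0]
    | a+1 =>
      simp only [Nat.add_sub_cancel]
      rw [hP21]
      simp only [Nat.add_sub_cancel]
      push_cast
      ring_nf
  have hB : ∀ (r : ℂ) (a b c d : ℕ), (r * qInt q (b : ℤ)) • P21 (mono2 q a (b-1) c (d+1))
      = (r * qInt q (b : ℤ)) • ((qInt q ((c : ℤ) + (d : ℤ) + 1))⁻¹ •
          ((q ^ ((d : ℤ) - (b : ℤ) + 2) * qInt q (c : ℤ)) • mono2 q (a+1) (b-1) (c-1) (d+1)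
            + qInt q ((d : ℤ) + 1) • mono2 q a b c d)) := by
    intro r a b c d
    match b with
    | 0 => simp [qint0]
    | b+1 =>
      simp only [Nat.add_sub_cancel]
      rw [hP21]
      simp only [Nat.add_sub_cancel]
      push_cast
      ring_nf
  have hC : ∀ (r : ℂ) (a b c d : ℕ), (r * qInt q (c : ℤ)) • P12 (mono2 q (a+1) b (c-1) d)
      = (r * qInt q (c : ℤ)) • ((qInt q ((a : ℤ) + (b : ℤ) + 1))⁻¹ •
          (qInt q ((a : ℤ) + 1) • mono2 q a b c d
            + (q ^ ((a : ℤ) - (c : ℤ) + 2) * qInt q (b : ℤ)) • mono2 q (a+1) (b-1) (c-1) (d+1))) := by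
    intro r a b c d
    match c with
    | 0 => simp [qint0]
    | c+1 =>
      simp only [Nat.add_sub_cancel]
      rw [hP12]
      simp only [Nat.add_sub_cancel]
      push_cast
      ring_nf
  have hD : ∀ (a b c d : ℕ), qInt q (d : ℤ) • P12 (mono2 q a (b+1) c (d-1))
      = qInt q (d : ℤ) • ((qInt q ((a : ℤ) + (b : ℤ) + 1))⁻¹ •
          (qInt q (a : ℤ) • mono2 q (a-1) (b+1) (c+1) (d-1)
            + (q ^ ((a : ℤ) - (c : ℤ)) * qInt q ((b : ℤ) + 1)) • mono2 q a b c d)) := by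
    intro a b c d
    match d with
    | 0 => simp [qint0]
    | d+1 =>
      simp only [Nat.add_sub_cancel]
      rw [hP12]
      simp only [Nat.add_sub_cancel]
      push_cast
      ring_nf
  have h1 : qInt q ((a : ℤ) + (i : ℤ)) ≠ 0 := hZ _ (by omega)
  have h2 : qInt q ((c : ℤ) + (j : ℤ) + 1) ≠ 0 := hZ _ (by omega)
  have h3 : qInt q ((c : ℤ) + (j : ℤ)) ≠ 0 := hZ _ (by omega)
  have h4 : qInt q ((a : ℤ) + (i : ℤ) + 1) ≠ 0 := hZ _ (by omega)
  have eA := mul_inv_cancel₀ h1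
  have eB := mul_inv_cancel₀ h2
  have eC := mul_inv_cancel₀ h3
  have eD := mul_inv_cancel₀ h4
  rw [hP12 a i c j, hP21 a i c j]
  simp only [map_add, map_smul]
  rw [hA a i c j, hB (q ^ ((a : ℤ) - (c : ℤ))) a i c j,
      hC (q ^ ((j : ℤ) - (i : ℤ))) a i c j, hD a i c j]
  have hL1 := hL (a : ℤ) (c : ℤ) ((a : ℤ) + 1) ((c : ℤ) + 1) ((a : ℤ) - (c : ℤ)) rfl rfl rfl
  have hL2 := hL (i : ℤ) (j : ℤ) ((i : ℤ) + 1) ((j : ℤ) + 1) ((i : ℤ) - (j : ℤ)) rfl rfl rfl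
  have hM1 := hM ((a : ℤ) - (c : ℤ)) ((j : ℤ) - (i : ℤ)) ((a : ℤ) + (i : ℤ) - ((c : ℤ) + (j : ℤ))) (by ring)
  have hN1 := hN ((i : ℤ) - (j : ℤ)) ((j : ℤ) - (i : ℤ)) (by ring)
  have hE : q ^ ((a : ℤ) - (c : ℤ)) * q ^ ((j : ℤ) - (i : ℤ) + 2)
      - q ^ ((j : ℤ) - (i : ℤ)) * q ^ ((a : ℤ) - (c : ℤ) + 2) = 0 := by
    rw [← zpow_add₀ hq0, ← zpow_add₀ hq0,
      show ((a : ℤ) - (c : ℤ) + ((j : ℤ) - (i : ℤ) + 2)) = ((j : ℤ) - (i : ℤ) + ((a : ℤ) - (c : ℤ) + 2)) from by ring,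
      sub_self]
  match_scalars
  · linear_combination
      (q ^ ((j : ℤ) - (i : ℤ)) * qInt q (a : ℤ) * qInt q ((c : ℤ) + 1)
        + q ^ ((a : ℤ) - (c : ℤ)) * qInt q (i : ℤ) * qInt q ((j : ℤ) + 1)) *
          (qInt q ((c : ℤ) + (j : ℤ) + 1) * (qInt q ((c : ℤ) + (j : ℤ) + 1))⁻¹ * eA + eB)
      - (q ^ ((j : ℤ) - (i : ℤ)) * qInt q (c : ℤ) * qInt q ((a : ℤ) + 1)
        + q ^ ((a : ℤ) - (c : ℤ)) * qInt q (j : ℤ) * qInt q ((i : ℤ) + 1)) *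
          (qInt q ((a : ℤ) + (i : ℤ) + 1) * (qInt q ((a : ℤ) + (i : ℤ) + 1))⁻¹ * eC + eD)
      + q ^ ((j : ℤ) - (i : ℤ)) * hL1 + q ^ ((a : ℤ) - (c : ℤ)) * hL2 + hM1
      + q ^ ((a : ℤ) - (c : ℤ)) * hN1
  · linear_combination
      qInt q (a : ℤ) * qInt q (j : ℤ) *
          (qInt q ((c : ℤ) + (j : ℤ) + 1) * (qInt q ((c : ℤ) + (j : ℤ) + 1))⁻¹ * eA + eB)
      - qInt q (a : ℤ) * qInt q (j : ℤ) *
          (qInt q ((a : ℤ) + (i : ℤ) + 1) * (qInt q ((a : ℤ) + (i : ℤ) + 1))⁻¹ * eC + eD)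
  · linear_combination
      (q ^ ((a : ℤ) - (c : ℤ)) * q ^ ((j : ℤ) - (i : ℤ) + 2) * qInt q (i : ℤ) * qInt q (c : ℤ)) *
          (qInt q ((c : ℤ) + (j : ℤ) + 1) * (qInt q ((c : ℤ) + (j : ℤ) + 1))⁻¹ * eA + eB)
      - (q ^ ((j : ℤ) - (i : ℤ)) * q ^ ((a : ℤ) - (c : ℤ) + 2) * qInt q (i : ℤ) * qInt q (c : ℤ)) *
          (qInt q ((a : ℤ) + (i : ℤ) + 1) * (qInt q ((a : ℤ) + (i : ℤ) + 1))⁻¹ * eC + eD)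
      + qInt q (i : ℤ) * qInt q (c : ℤ) * hE
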